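/- Let w ∈ ℕⁿ, let I := {i : wᵢ = 0}, and let g₁,…,g_p and h be polynomials in z = (z₁,…,zₙ), each weighted homogeneous with respect to w, with h of weighted degree e > 0. Fix uᵢ ∈ ℂ* for i ∈ I and set W := {z ∈ (ℂ*)ⁿ : zᵢ = uᵢ for i ∈ I, and g₁(z) = ⋯ = g_p(z) = 0}. Assume that at every point of W the differentials of g₁,…,g_p with respect to the variables (zᵢ)_{i∉I} are linearly independent. Then for every a ∈ W with h(a) ≠ 0, the differentials of h, g₁,…,g_p with respect to the variables (zᵢ)_{i∉I} are linearly independent at a. -/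

import Mathlib

/-! By the weighted Euler identity `∑ wᵢ zᵢ ∂ᵢφ = d φ`, the linear functional
`v ↦ ∑_{wᵢ ≠ 0} wᵢ aᵢ vᵢ` kills every `dgⱼ(a)`, as `gⱼ(a) = 0`, but sends `dh(a)` to
`e h(a) ≠ 0`. Hence `dh(a)` lies outside the span of the independent `dgⱼ(a)`. -/

open MvPolynomial Filter Topology Set

noncomputable section

namespace NewtonPaper

/-- A point of a finite-dimensional Euclidean space viewed as a plain function. -/
def pt {m : ℕ} (p : EuclideanSpace ℂ (Fin m)) : Fin m → ℂ := p

/-- `d(w;g)`: the minimal value of `∑ i, w i * α i` over the support of `g`. -/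
def dmin {n : ℕ} (w : Fin n → ℕ) (g : MvPolynomial (Fin n) ℂ) : ℕ :=
  sInf {m : ℕ | ∃ α ∈ g.support, (∑ i, w i * α i) = m}

/-- The face function `g_w` of `g` with respect to the weight vector `w`. -/
def facePoly {n : ℕ} (w : Fin n → ℕ) (g : MvPolynomial (Fin n) ℂ) : MvPolynomial (Fin n) ℂ :=
  ∑ α ∈ g.support.filter (fun α => (∑ i, w i * α i) = dmin w g), monomial α (coeff α g)

/-- The Newton polyhedron `Γ₊(g)`. -/
def NewtonPolyhedron {n : ℕ} (g : MvPolynomial (Fin n) ℂ) : Set (Fin n → ℝ) :=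
  convexHull ℝ (⋃ α ∈ g.support, {x : Fin n → ℝ | ∀ i, (α i : ℝ) ≤ x i})

/-- The Newton boundary `Γ(g)`: the union of the compact faces of `Γ₊(g)`, i.e. of the
faces of `Γ₊(g)` supported by strictly positive linear functionals. -/
def NewtonBoundary {n : ℕ} (g : MvPolynomial (Fin n) ℂ) : Set (Fin n → ℝ) :=
  ⋃ w ∈ {w : Fin n → ℝ | ∀ i, 0 < w i},
    {x ∈ NewtonPolyhedron g |
      ∀ y ∈ NewtonPolyhedron g, (∑ i, w i * x i) ≤ ∑ i, w i * y i}

/-- `g` vanishes identically on the coordinate subspace `ℂ^I`. -/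
def VanishesOn {n : ℕ} (g : MvPolynomial (Fin n) ℂ) (I : Set (Fin n)) : Prop :=
  ∀ z : Fin n → ℂ, (∀ i, i ∉ I → z i = 0) → eval z g = 0

/-- `g 0, …, g (p-1)` define a (Newton) non-degenerate complete intersection germ at `0`. -/
def IsNondegCI {n p : ℕ} (g : Fin p → MvPolynomial (Fin n) ℂ) : Prop :=
  ∀ w : Fin n → ℕ, (∀ i, 0 < w i) →
    ∀ z : Fin n → ℂ, (∀ i, z i ≠ 0) → (∀ j, eval z (facePoly w (g j)) = 0) →
      LinearIndependent ℂ fun j => fun i => eval z (pderiv i (facePoly w (g j)))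

/-- `R` is a radius of local tameness of the set of functions `{g 0, …, g (p-1)}`. -/
def IsTameRadius {n p : ℕ} (R : ℝ) (g : Fin p → MvPolynomial (Fin n) ℂ) : Prop :=
  ∀ I : Finset (Fin n), I.Nonempty → (∀ j, VanishesOn (g j) ↑I) →
    ∀ w : Fin n → ℕ, w ≠ 0 → (∀ i, w i = 0 ↔ i ∈ I) →
      ∀ z : Fin n → ℂ, (∀ i, z i ≠ 0) → (∑ i ∈ I, ‖z i‖ ^ 2) < R →
        (∀ j, eval z (facePoly w (g j)) = 0) →
        LinearIndependent ℂ fun j => fun i : {i : Fin n // i ∉ I} =>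
          eval z (pderiv i.1 (facePoly w (g j)))

/-- The specialisation `f_t` of a polynomial `P` on `ℂ × ℂⁿ` (variable `0` is `t`). -/
def specialize {n : ℕ} (t : ℂ) (P : MvPolynomial (Fin (n + 1)) ℂ) : MvPolynomial (Fin n) ℂ :=
  aeval (Fin.cases (C t) fun i => X i) P

/-- The family `{f_t}`, where `f = (F 0) ⋯ (F (k₀-1))`, is Newton-admissible. -/
def NewtonAdmissible {n k₀ : ℕ} (F : Fin k₀ → MvPolynomial (Fin (n + 1)) ℂ) : Prop :=
  ∃ R > (0 : ℝ), ∃ τ > (0 : ℝ), ∀ t : ℂ, ‖t‖ < τ →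
    (∀ k, NewtonBoundary (specialize t (F k)) = NewtonBoundary (specialize 0 (F k))) ∧
    ∀ (p : ℕ) (κ : Fin p → Fin k₀), Function.Injective κ →
      IsNondegCI (fun j => specialize t (F (κ j))) ∧
      ∃ R' > R, IsTameRadius R' fun j => specialize t (F (κ j))

/-- The stratum `S^I(K)` of the canonical toric stratification of `V(f) ⊆ ℂ × ℂⁿ`. -/
def stratum {n k₀ : ℕ} (F : Fin k₀ → MvPolynomial (Fin (n + 1)) ℂ)
    (I : Set (Fin n)) (K : Set (Fin k₀)) : Set (EuclideanSpace ℂ (Fin (n + 1))) :=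
  {p | (∀ i : Fin n, pt p i.succ ≠ 0 ↔ i ∈ I) ∧ ∀ k, eval (pt p) (F k) = 0 ↔ k ∈ K}

/-- The slice `S^I_t(K)` of `S^I(K)`, viewed in `ℂⁿ`. -/
def stratumT {n k₀ : ℕ} (F : Fin k₀ → MvPolynomial (Fin (n + 1)) ℂ) (t : ℂ)
    (I : Set (Fin n)) (K : Set (Fin k₀)) : Set (EuclideanSpace ℂ (Fin n)) :=
  {z | (∀ i : Fin n, pt z i ≠ 0 ↔ i ∈ I) ∧ ∀ k, eval (pt z) (specialize t (F k)) = 0 ↔ k ∈ K}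

/-- Orthogonal projection onto a subspace, as an endomorphism. -/
def projOf {m : ℕ} (T : Submodule ℂ (EuclideanSpace ℂ (Fin m))) :
    EuclideanSpace ℂ (Fin m) →L[ℂ] EuclideanSpace ℂ (Fin m) :=
  T.subtypeL.comp (T.orthogonalProjectionOnto)

/-- Tangent space of a set at a point (the ℂ-span of the tangent cone; for a
non-singular complex submanifold this is the usual tangent space). -/
def tangentSpaceAt {m : ℕ} (S : Set (EuclideanSpace ℂ (Fin m)))
    (p : EuclideanSpace ℂ (Fin m)) : Submodule ℂ (EuclideanSpace ℂ (Fin m)) :=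
  Submodule.span ℂ (tangentConeAt ℂ S p)

/-- Convergence of subspaces in the sense of convergence of orthogonal projections. -/
def TendstoSubspaces {α : Type*} {m : ℕ} (l : Filter α)
    (T : α → Submodule ℂ (EuclideanSpace ℂ (Fin m)))
    (T' : Submodule ℂ (EuclideanSpace ℂ (Fin m))) : Prop :=
  Tendsto (fun x => projOf (T x)) l (𝓝 (projOf T'))

/-- Whitney's condition (b) for the pair `(S', S)`. -/
def WhitneyB {m : ℕ} (S' S : Set (EuclideanSpace ℂ (Fin m))) : Prop :=
  ∀ q ∈ S' ∩ closure S, ∀ pm qm : ℕ → EuclideanSpace ℂ (Fin m),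
    ∀ T : Submodule ℂ (EuclideanSpace ℂ (Fin m)), ∀ u : EuclideanSpace ℂ (Fin m),
      (∀ j, pm j ∈ S) → (∀ j, qm j ∈ S') → (∀ j, pm j ≠ qm j) →
      Tendsto pm atTop (𝓝 q) → Tendsto qm atTop (𝓝 q) →
      TendstoSubspaces atTop (fun j => tangentSpaceAt S (pm j)) T →
      Tendsto (fun j => (‖pm j - qm j‖ : ℝ)⁻¹ • (pm j - qm j)) atTop (𝓝 u) →
      u ∈ T

/-- `S` is, near `p ∈ S`, a non-singular (complex) locally closed submanifold. -/
def IsNonsingularAt {m : ℕ} (S : Set (EuclideanSpace ℂ (Fin m)))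
    (p : EuclideanSpace ℂ (Fin m)) : Prop :=
  ∃ (k : ℕ) (U : Set (EuclideanSpace ℂ (Fin m)))
    (g : EuclideanSpace ℂ (Fin m) → EuclideanSpace ℂ (Fin k)),
    IsOpen U ∧ p ∈ U ∧ Differentiable ℂ g ∧ S ∩ U = {x ∈ U | g x = 0} ∧
      Function.Surjective (fderiv ℂ g p)

/-- Whitney (b)-regular stratification of `V`. -/
def IsWhitneyStratification {m : ℕ} (V : Set (EuclideanSpace ℂ (Fin m)))
    (𝒮 : Set (Set (EuclideanSpace ℂ (Fin m)))) : Prop :=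
  ⋃₀ 𝒮 = V ∧
  (∀ S ∈ 𝒮, ∀ S' ∈ 𝒮, S ≠ S' → Disjoint S S') ∧
  (∀ S ∈ 𝒮, ∀ p ∈ S, IsNonsingularAt S p) ∧
  (∀ S ∈ 𝒮, ∀ S' ∈ 𝒮, S ≠ S' → WhitneyB S' S)

/-- The coefficient vector of the complex differential of `P` at `p`. -/
def dvec {m : ℕ} (P : MvPolynomial (Fin m) ℂ) (p : EuclideanSpace ℂ (Fin m)) :
    Fin m → ℂ := fun j => eval (pt p) (pderiv j P)

/-- The kernel of the complex differential of `P` at `p`. -/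
def dKer {m : ℕ} (P : MvPolynomial (Fin m) ℂ) (p : EuclideanSpace ℂ (Fin m)) :
    Submodule ℂ (EuclideanSpace ℂ (Fin m)) :=
  LinearMap.ker
    (ContinuousLinearMap.toLinearMap
      (∑ j, dvec P p j • (EuclideanSpace.proj j : EuclideanSpace ℂ (Fin m) →L[ℂ] ℂ)))

/-- The subspace `ℂ × ℂ^I ⊆ ℂ × ℂⁿ`, where `I = {i | (i : ℕ) < nI}`. -/
def axisCI (n nI : ℕ) : Submodule ℂ (EuclideanSpace ℂ (Fin (n + 1))) :=
  ⨅ i ∈ {i : Fin n | nI ≤ (i : ℕ)},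
    LinearMap.ker (ContinuousLinearMap.toLinearMap
      (EuclideanSpace.proj i.succ : EuclideanSpace ℂ (Fin (n + 1)) →L[ℂ] ℂ))

/-- Thom's `a_f` condition for a stratification `𝒮`, with `V(f) = {f = 0}`. -/
def ThomAf {m : ℕ} (P : MvPolynomial (Fin m) ℂ)
    (𝒮 : Set (Set (EuclideanSpace ℂ (Fin m)))) : Prop :=
  ∀ S ∈ 𝒮, ∀ q ∈ S, ∀ pm : ℕ → EuclideanSpace ℂ (Fin m),
    ∀ T : Submodule ℂ (EuclideanSpace ℂ (Fin m)),
      (∀ j, eval (pt (pm j)) P ≠ 0) → (∀ j, dvec P (pm j) ≠ 0) →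
      Tendsto pm atTop (𝓝 q) →
      TendstoSubspaces atTop (fun j => dKer P (pm j)) T →
      tangentSpaceAt S q ≤ T

/-- Inclusion `Fin m → Fin k₀` given `m ≤ k₀`. -/
def castIdx {k₀ m : ℕ} (h : m ≤ k₀) (k : Fin m) : Fin k₀ :=
  ⟨k, lt_of_lt_of_le k.isLt h⟩

end NewtonPaper

namespace MvPolynomial

variable {R σ : Type*} [CommSemiring R] [Fintype σ] {w : σ → ℕ} {φ : MvPolynomial σ R} {d : ℕ}

theorem isWeightedHomogeneous_iff_forall_mem_support :
    φ.IsWeightedHomogeneous w d ↔ ∀ α ∈ φ.support, ∑ i, w i * α i = d := by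
  refine ⟨fun h α hα => ?_, fun h α hα => ?_⟩
  · simpa [Finsupp.weight_apply, Finsupp.sum_fintype, mul_comm] using h (mem_support_iff.1 hα)
  · simpa [Finsupp.weight_apply, Finsupp.sum_fintype, mul_comm] using h α (mem_support_iff.2 hα)

theorem IsWeightedHomogeneous.sum_weight_mul_eval_pderiv (hφ : φ.IsWeightedHomogeneous w d)
    (z : σ → R) : ∑ i, (w i : R) * z i * eval z (pderiv i φ) = d * eval z φ := by
  simpa [map_sum, nsmul_eq_mul, mul_assoc] using congrArg (eval z) hφ.sum_weight_X_mul_pderiv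

theorem IsWeightedHomogeneous.sum_weight_ne_zero_mul_eval_pderiv
    (hφ : φ.IsWeightedHomogeneous w d) (z : σ → R) :
    ∑ i : {i // w i ≠ 0}, (w i : R) * z i * eval z (pderiv i.1 φ) = d * eval z φ := by
  have hzero : ∑ i : {i // ¬w i ≠ 0}, (w i : R) * z i * eval z (pderiv i.1 φ) = 0 :=
    Finset.sum_eq_zero fun i _ => by rw [not_not.1 i.2, Nat.cast_zero, zero_mul, zero_mul]
  rw [← hφ.sum_weight_mul_eval_pderiv z,
    ← Fintype.sum_subtype_add_sum_subtype (fun i => w i ≠ 0), hzero, add_zero]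

end MvPolynomial

theorem LinearIndependent.option_of_map_eq_zero {K V W ι : Type*} [DivisionRing K]
    [AddCommGroup V] [Module K V] [AddCommMonoid W] [Module K W] {v : Option ι → V}
    (hv : LinearIndependent K (v ∘ some)) (f : V →ₗ[K] W) (hf : ∀ j, f (v (some j)) = 0)
    (hnone : f (v none) ≠ 0) : LinearIndependent K v := by
  refine linearIndependent_option.2 ⟨hv, fun hmem => hnone ?_⟩
  have hspan : Submodule.span K (range (v ∘ some)) ≤ LinearMap.ker f :=
    Submodule.span_le.2 <| range_subset_iff.2 hf
  exact hspan hmem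

namespace NewtonPaper

theorem weighted_homogeneous_transversality_general (n p : ℕ) (w : Fin n → ℕ)
    (g : Fin p → MvPolynomial (Fin n) ℂ) (h : MvPolynomial (Fin n) ℂ)
    (dg : Fin p → ℕ) (e : ℕ) (he : 0 < e)
    (hg : ∀ j, ∀ α ∈ (g j).support, (∑ i, w i * α i) = dg j)
    (hh : ∀ α ∈ h.support, (∑ i, w i * α i) = e)
    (u : Fin n → ℂ)
    (hreg : ∀ z : Fin n → ℂ, (∀ i, z i ≠ 0) → (∀ i, w i = 0 → z i = u i) →
      (∀ j, eval z (g j) = 0) →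
      LinearIndependent ℂ fun j => fun i : {i : Fin n // w i ≠ 0} =>
        eval z (pderiv i.1 (g j))) :
    ∀ a : Fin n → ℂ, (∀ i, a i ≠ 0) → (∀ i, w i = 0 → a i = u i) →
      (∀ j, eval a (g j) = 0) → eval a h ≠ 0 →
      LinearIndependent ℂ fun j : Option (Fin p) =>
        fun i : {i : Fin n // w i ≠ 0} => eval a (pderiv i.1 (Option.elim j h g)) := by
  intro a ha hau hga hha
  let euler : ({i : Fin n // w i ≠ 0} → ℂ) →ₗ[ℂ] ℂ :=
    Fintype.linearCombination ℂ fun i => (w i.1 : ℂ) * a i.1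
  have euler_apply : ∀ (φ : MvPolynomial (Fin n) ℂ) (d : ℕ), φ.IsWeightedHomogeneous w d →
      euler (fun i => eval a (pderiv i.1 φ)) = d * eval a φ := fun φ d hφ => by
    rw [← hφ.sum_weight_ne_zero_mul_eval_pderiv, Fintype.linearCombination_apply]
    exact Finset.sum_congr rfl fun i _ => by rw [smul_eq_mul, mul_comm]
  refine LinearIndependent.option_of_map_eq_zero ?_ euler (fun j => ?_) ?_
  · exact hreg a ha hau hga
  · exact (euler_apply _ _ (isWeightedHomogeneous_iff_forall_mem_support.2 (hg j))).trans
      (by rw [hga j, mul_zero])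
  · exact (euler_apply _ _ (isWeightedHomogeneous_iff_forall_mem_support.2 hh)).trans_ne
      (mul_ne_zero (Nat.cast_ne_zero.2 he.ne') hha)

/-- weighted-homogeneity argument of §8 of Eyral–Oka. If the weighted
homogeneous polynomials `g₁,…,g_p` cut out, in the torus slice
`{z ∈ (ℂ*)ⁿ : z_i = u_i for w_i = 0}`, a variety `W` on which their partial differentials
in the variables `(z_i)_{w_i ≠ 0}` are linearly independent, then at every point `a ∈ W`
with `h(a) ≠ 0` (where `h` is weighted homogeneous of positive degree `e`), the partial
differentials of `h, g₁,…,g_p` are linearly independent. -/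
theorem weighted_homogeneous_transversality (n p : ℕ) (w : Fin n → ℕ)
    (g : Fin p → MvPolynomial (Fin n) ℂ) (h : MvPolynomial (Fin n) ℂ)
    (dg : Fin p → ℕ) (e : ℕ) (he : 0 < e)
    (hg : ∀ j, ∀ α ∈ (g j).support, (∑ i, w i * α i) = dg j)
    (hh : ∀ α ∈ h.support, (∑ i, w i * α i) = e)
    (u : Fin n → ℂ) (hu : ∀ i, w i = 0 → u i ≠ 0)
    (hreg : ∀ z : Fin n → ℂ, (∀ i, z i ≠ 0) → (∀ i, w i = 0 → z i = u i) →
      (∀ j, eval z (g j) = 0) →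
      LinearIndependent ℂ fun j => fun i : {i : Fin n // w i ≠ 0} =>
        eval z (pderiv i.1 (g j))) :
    ∀ a : Fin n → ℂ, (∀ i, a i ≠ 0) → (∀ i, w i = 0 → a i = u i) →
      (∀ j, eval a (g j) = 0) → eval a h ≠ 0 →
      LinearIndependent ℂ fun j : Option (Fin p) =>
        fun i : {i : Fin n // w i ≠ 0} => eval a (pderiv i.1 (Option.elim j h g)) :=
  weighted_homogeneous_transversality_general n p w g h dg e he hg hh u hreg

end NewtonPaper
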